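/- Let G be a finite graph with minimum degree at least 2 in which every degree-2 vertex has both neighbors of degree at least 3 (no 2⁺-paths). Assign initial charge 3d(u) − 8 to each vertex u and apply the rules: (R0) every 3⁺-vertex gives 1 to each 2-neighbor, (R1) every 4⁺-vertex gives 1 to each 3-neighbor, (R2) every (0,0,0)-vertex gives 1 to each (1,1,0)-neighbor. Assume additionally that G has no (1,1,1)-vertex, no 3-vertex with both a 2-neighbor and a (1,1,0)-neighbor, and no 3-vertex with two (1,1,0)-neighbors and a third 3-neighbor. Then every vertex has nonnegative final charge. -/
import Mathlib


open SimpleGraph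

variable {V : Type} [Fintype V] [DecidableEq V]

/-- A `(1,1,0)`-vertex: a 3-vertex with exactly two neighbors of degree 2. -/
def IsOneOneZeroVertex (G : SimpleGraph V) [DecidableRel G.Adj] (v : V) : Prop :=
  G.degree v = 3 ∧ ((G.neighborFinset v).filter fun u => G.degree u = 2).card = 2

/-- A `(0,0,0)`-vertex: a 3-vertex with no neighbor of degree 2. -/
def IsZeroZeroZeroVertex (G : SimpleGraph V) [DecidableRel G.Adj] (v : V) : Prop :=
  G.degree v = 3 ∧ ∀ u ∈ G.neighborFinset v, G.degree u ≠ 2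

open Classical in
/-- The charge sent from `u` to its neighbor `v` under the rules:
(R0) every 3⁺-vertex gives 1 to each 2-neighbor; (R1) every 4⁺-vertex gives 1 to each
3-neighbor; (R2) every (0,0,0)-vertex gives 1 to each (1,1,0)-neighbor. -/
noncomputable def transfer (G : SimpleGraph V) [DecidableRel G.Adj] (u v : V) : ℚ :=
  if G.Adj u v then
    (if 3 ≤ G.degree u ∧ G.degree v = 2 then 1 else 0) +
    (if 4 ≤ G.degree u ∧ G.degree v = 3 then 1 else 0) +
    (if IsZeroZeroZeroVertex G u ∧ IsOneOneZeroVertex G v then 1 else 0)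
  else 0

/-- The final charge of `u`: initial charge `3 d(u) − 8` plus received minus given. -/
noncomputable def finalCharge (G : SimpleGraph V) [DecidableRel G.Adj] (u : V) : ℚ :=
  (3 * (G.degree u : ℚ) - 8) + ∑ v : V, (transfer G v u - transfer G u v)

section AuxLemmas

set_option linter.unusedSectionVars false
variable (G : SimpleGraph V) [DecidableRel G.Adj]

lemma transfer_nonneg (u v : V) : 0 ≤ transfer G u v := by
  unfold transfer; split_ifs <;> norm_num

lemma transfer_of_not_adj {u v : V} (h : ¬ G.Adj u v) : transfer G u v = 0 := by
  simp [transfer, h]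

lemma finalCharge_eq (u : V) :
    finalCharge G u = (3 * (G.degree u : ℚ) - 8) +
      ∑ v ∈ G.neighborFinset u, (transfer G v u - transfer G u v) := by
  rw [finalCharge]
  congr 1
  refine (Finset.sum_subset (Finset.subset_univ _) ?_).symm
  intro v _ hv
  rw [mem_neighborFinset] at hv
  rw [transfer_of_not_adj G hv, transfer_of_not_adj G (fun h => hv h.symm), sub_zero]

lemma transfer_le_one (u v : V) : transfer G u v ≤ 1 := by
  rw [transfer]
  split
  · by_cases c1 : 3 ≤ G.degree u ∧ G.degree v = 2
    · have c2 : ¬(4 ≤ G.degree u ∧ G.degree v = 3) := fun h => by omega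
      have c3 : ¬(IsZeroZeroZeroVertex G u ∧ IsOneOneZeroVertex G v) := fun h => by
        have := h.2.1; omega
      simp [c1, c2, c3]
    · by_cases c2 : 4 ≤ G.degree u ∧ G.degree v = 3
      · have c3 : ¬(IsZeroZeroZeroVertex G u ∧ IsOneOneZeroVertex G v) := fun h => by
          have := h.1.1; omega
        simp [c1, c2, c3]
      · by_cases c3 : IsZeroZeroZeroVertex G u ∧ IsOneOneZeroVertex G v <;>
          simp [c1, c2, c3]
  · norm_num

lemma transfer_from2 {u : V} (hu : G.degree u = 2) (v : V) : transfer G u v = 0 := by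
  rw [transfer]
  split
  · rw [if_neg (fun hh : 3 ≤ G.degree u ∧ _ => by have := hh.1; omega),
      if_neg (fun hh : 4 ≤ G.degree u ∧ _ => by have := hh.1; omega),
      if_neg (fun hh : IsZeroZeroZeroVertex G u ∧ _ => by have := hh.1.1; omega)]
    norm_num
  · rfl

lemma transfer_R0 {u v : V} (h : G.Adj u v) (hu : 3 ≤ G.degree u) (hv : G.degree v = 2) :
    transfer G u v = 1 := by
  rw [transfer, if_pos h, if_pos ⟨hu, hv⟩,
    if_neg (fun hh : _ ∧ G.degree v = 3 => by have := hh.2; omega),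
    if_neg (fun hh : _ ∧ IsOneOneZeroVertex G v => by have := hh.2.1; omega)]
  norm_num

open Classical in
lemma transfer_from3 {u : V} (hu : G.degree u = 3) {v : V} (h : G.Adj u v) :
    transfer G u v = (if G.degree v = 2 then 1 else 0) +
      (if IsZeroZeroZeroVertex G u ∧ IsOneOneZeroVertex G v then 1 else 0) := by
  rw [transfer, if_pos h]
  simp only [hu]
  norm_num

open Classical in
lemma transfer_to3 {v : V} (hv : G.degree v = 3) {u : V} (h : G.Adj u v) :
    transfer G u v = (if 4 ≤ G.degree u then 1 else 0) +
      (if IsZeroZeroZeroVertex G u ∧ IsOneOneZeroVertex G v then 1 else 0) := by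
  rw [transfer, if_pos h]
  simp only [hv]
  norm_num
-- degree-3 case: two 2-neighbors
lemma case_two (hmin : ∀ v : V, 2 ≤ G.degree v)
    (hnoA : ¬ ∃ v w t, G.degree v = 3 ∧ G.Adj v w ∧ G.degree w = 2 ∧
      G.Adj v t ∧ IsOneOneZeroVertex G t)
    {u a b c : V} (h3 : G.degree u = 3) (hN : G.neighborFinset u = {a, b, c})
    (hab : a ≠ b) (hac : a ≠ c) (hbc : b ≠ c)
    (da : G.degree a = 2) (db : G.degree b = 2) (dc : G.degree c ≠ 2) :
    (-1 : ℚ) ≤ (transfer G a u - transfer G u a) + (transfer G b u - transfer G u b) +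
      (transfer G c u - transfer G u c) := by
  have ma : a ∈ G.neighborFinset u := by rw [hN]; simp
  have ha : G.Adj u a := by rwa [mem_neighborFinset] at ma
  have hb : G.Adj u b := by rw [← mem_neighborFinset, hN]; simp
  have hc : G.Adj u c := by rw [← mem_neighborFinset, hN]; simp
  have u110 : IsOneOneZeroVertex G u := by
    refine ⟨h3, ?_⟩
    have hfil : (({a, b, c} : Finset V).filter fun x => G.degree x = 2) = {a, b} := by
      rw [Finset.filter_insert, if_pos da, Finset.filter_insert, if_pos db,
        Finset.filter_singleton, if_neg dc]
      simp
    rw [hN, hfil, Finset.card_insert_of_notMem (by simp [hab]), Finset.card_singleton]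
  have nu000 : ¬ IsZeroZeroZeroVertex G u := fun hh => hh.2 a ma da
  have fa1 : transfer G u a = 1 := transfer_R0 G ha (by omega) da
  have fa2 : transfer G a u = 0 := transfer_from2 G da u
  have fb1 : transfer G u b = 1 := transfer_R0 G hb (by omega) db
  have fb2 : transfer G b u = 0 := transfer_from2 G db u
  have fc1 : transfer G u c = 0 := by
    rw [transfer_from3 G h3 hc, if_neg dc, if_neg (fun hh => nu000 hh.1)]
    norm_num
  have fc2 : (1 : ℚ) ≤ transfer G c u := by
    rw [transfer_to3 G h3 hc.symm]
    by_cases d4 : 4 ≤ G.degree c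
    · rw [if_pos d4]
      split_ifs <;> norm_num
    · have dc3 : G.degree c = 3 := by have := hmin c; omega
      have c000 : IsZeroZeroZeroVertex G c := by
        refine ⟨dc3, fun w hw dw2 => ?_⟩
        exact hnoA ⟨c, w, u, dc3, (mem_neighborFinset G c w).mp hw, dw2, hc.symm, u110⟩
      rw [if_neg d4, if_pos ⟨c000, u110⟩]
      norm_num
  linarith

-- degree-3 case: exactly one 2-neighbor
lemma case_one {u a b c : V} (h3 : G.degree u = 3) (hN : G.neighborFinset u = {a, b, c})
    (da : G.degree a = 2) (db : G.degree b ≠ 2) (dc : G.degree c ≠ 2) :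
    (-1 : ℚ) ≤ (transfer G a u - transfer G u a) + (transfer G b u - transfer G u b) +
      (transfer G c u - transfer G u c) := by
  have ma : a ∈ G.neighborFinset u := by rw [hN]; simp
  have ha : G.Adj u a := by rwa [mem_neighborFinset] at ma
  have hb : G.Adj u b := by rw [← mem_neighborFinset, hN]; simp
  have hc : G.Adj u c := by rw [← mem_neighborFinset, hN]; simp
  have nu000 : ¬ IsZeroZeroZeroVertex G u := fun hh => hh.2 a ma da
  have fa1 : transfer G u a = 1 := transfer_R0 G ha (by omega) da
  have fa2 : transfer G a u = 0 := transfer_from2 G da u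
  have fb1 : transfer G u b = 0 := by
    rw [transfer_from3 G h3 hb, if_neg db, if_neg (fun hh => nu000 hh.1)]; norm_num
  have fc1 : transfer G u c = 0 := by
    rw [transfer_from3 G h3 hc, if_neg dc, if_neg (fun hh => nu000 hh.1)]; norm_num
  have := transfer_nonneg G b u
  have := transfer_nonneg G c u
  linarith

-- degree-3 case: no 2-neighbor
lemma case_zero (hmin : ∀ v : V, 2 ≤ G.degree v)
    (hnoB : ¬ ∃ u v w t, G.degree u = 3 ∧ G.Adj u v ∧ G.Adj u w ∧ G.Adj u t ∧
      v ≠ w ∧ v ≠ t ∧ w ≠ t ∧ IsOneOneZeroVertex G v ∧ IsOneOneZeroVertex G w ∧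
      G.degree t = 3)
    {u a b c : V} (h3 : G.degree u = 3) (hN : G.neighborFinset u = {a, b, c})
    (hab : a ≠ b) (hac : a ≠ c) (hbc : b ≠ c)
    (da : G.degree a ≠ 2) (db : G.degree b ≠ 2) (dc : G.degree c ≠ 2) :
    (-1 : ℚ) ≤ (transfer G a u - transfer G u a) + (transfer G b u - transfer G u b) +
      (transfer G c u - transfer G u c) := by
  have ha : G.Adj u a := by rw [← mem_neighborFinset, hN]; simp
  have hb : G.Adj u b := by rw [← mem_neighborFinset, hN]; simp
  have hc : G.Adj u c := by rw [← mem_neighborFinset, hN]; simp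
  have gge0 : ∀ x, G.Adj u x → G.degree x ≠ 2 → ¬ IsOneOneZeroVertex G x →
      0 ≤ transfer G x u - transfer G u x := by
    intro x hx d2 p
    have h0 : transfer G u x = 0 := by
      rw [transfer_from3 G h3 hx, if_neg d2, if_neg (fun hh => p hh.2)]; norm_num
    rw [h0, sub_zero]; exact transfer_nonneg G x u
  have gge1 : ∀ x, G.Adj u x → 4 ≤ G.degree x →
      1 ≤ transfer G x u - transfer G u x := by
    intro x hx d4
    have h0 : transfer G u x = 0 := by
      rw [transfer_from3 G h3 hx, if_neg (by omega),
        if_neg (fun hh => by have := hh.2.1; omega)]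
      norm_num
    have h1 : (1 : ℚ) ≤ transfer G x u := by
      rw [transfer_to3 G h3 hx.symm, if_pos d4]
      split_ifs <;> norm_num
    linarith
  have ggen1 : ∀ x : V, (-1 : ℚ) ≤ transfer G x u - transfer G u x := by
    intro x
    have := transfer_le_one G u x
    have := transfer_nonneg G x u
    linarith
  have pair : ∀ x y z : V, G.Adj u x → G.Adj u y → G.Adj u z → x ≠ y → x ≠ z → y ≠ z →
      IsOneOneZeroVertex G x → IsOneOneZeroVertex G y → G.degree z ≠ 2 →
      4 ≤ G.degree z := by
    intro x y z hx hy hz hxy hxz hyz px py dz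
    by_contra hlt
    have hz3 : G.degree z = 3 := by have := hmin z; omega
    exact hnoB ⟨u, x, y, z, h3, hx, hy, hz, hxy, hxz, hyz, px, py, hz3⟩
  by_cases pa : IsOneOneZeroVertex G a <;> by_cases pb : IsOneOneZeroVertex G b <;>
    by_cases pc : IsOneOneZeroVertex G c
  · have h4 := pair a b c ha hb hc hab hac hbc pa pb dc
    have := pc.1; omega
  · have h4 := pair a b c ha hb hc hab hac hbc pa pb dc
    have := gge1 c hc h4
    have := ggen1 a; have := ggen1 b
    linarith
  · have h4 := pair a c b ha hc hb hac hab hbc.symm pa pc db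
    have := gge1 b hb h4
    have := ggen1 a; have := ggen1 c
    linarith
  · have := ggen1 a
    have := gge0 b hb db pb; have := gge0 c hc dc pc
    linarith
  · have h4 := pair b c a hb hc ha hbc (Ne.symm hab) (Ne.symm hac) pb pc da
    have := gge1 a ha h4
    have := ggen1 b; have := ggen1 c
    linarith
  · have := ggen1 b
    have := gge0 a ha da pa; have := gge0 c hc dc pc
    linarith
  · have := ggen1 c
    have := gge0 a ha da pa; have := gge0 b hb db pb
    linarith
  · have := gge0 a ha da pa; have := gge0 b hb db pb; have := gge0 c hc dc pc
    linarith

end AuxLemmas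

/-- In a graph with minimum degree at least 2, no `2⁺`-path, no `(1,1,1)`-vertex,
no 3-vertex with both a 2-neighbor and a `(1,1,0)`-neighbor, and no 3-vertex with two
`(1,1,0)`-neighbors and a third 3-neighbor, every vertex has nonnegative final charge
after discharging via R0–R2. -/
theorem finalCharge_nonneg (G : SimpleGraph V) [DecidableRel G.Adj]
    (hmin : ∀ v : V, 2 ≤ G.degree v)
    (hno2path : ¬ ∃ v w, G.Adj v w ∧ G.degree v = 2 ∧ G.degree w = 2)
    (hno111 : ¬ ∃ v, G.degree v = 3 ∧ ∀ u ∈ G.neighborFinset v, G.degree u = 2)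
    (hnoA : ¬ ∃ v w t, G.degree v = 3 ∧ G.Adj v w ∧ G.degree w = 2 ∧
      G.Adj v t ∧ IsOneOneZeroVertex G t)
    (hnoB : ¬ ∃ u v w t, G.degree u = 3 ∧ G.Adj u v ∧ G.Adj u w ∧ G.Adj u t ∧
      v ≠ w ∧ v ≠ t ∧ w ≠ t ∧ IsOneOneZeroVertex G v ∧ IsOneOneZeroVertex G w ∧
      G.degree t = 3) :
    ∀ u : V, 0 ≤ finalCharge G u := by
  intro u
  rw [finalCharge_eq]
  rcases Nat.lt_or_ge (G.degree u) 4 with h4 | h4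
  · rcases (by have := hmin u; omega : G.degree u = 2 ∨ G.degree u = 3) with h2 | h3
    · -- degree 2
      have hsum : ∀ v ∈ G.neighborFinset u, transfer G v u - transfer G u v = 1 := by
        intro v hv
        rw [mem_neighborFinset] at hv
        have hd2 : G.degree v ≠ 2 := fun hh => hno2path ⟨u, v, hv, h2, hh⟩
        have hdv : 3 ≤ G.degree v := by have := hmin v; omega
        rw [transfer_R0 G hv.symm hdv h2, transfer_from2 G h2 v, sub_zero]
      rw [Finset.sum_congr rfl hsum, Finset.sum_const, card_neighborFinset_eq_degree, h2]
      norm_num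
    · -- degree 3
      have hcard : (G.neighborFinset u).card = 3 := by
        rw [card_neighborFinset_eq_degree]; exact h3
      obtain ⟨a, b, c, hab, hac, hbc, hN⟩ := Finset.card_eq_three.mp hcard
      rw [hN, Finset.sum_insert (by simp [hab, hac]), Finset.sum_insert (by simp [hbc]),
        Finset.sum_singleton]
      have hdeg : (G.degree u : ℚ) = 3 := by exact_mod_cast h3
      by_cases da : G.degree a = 2 <;> by_cases db : G.degree b = 2 <;>
        by_cases dc : G.degree c = 2
      · exfalso
        refine hno111 ⟨u, h3, ?_⟩
        intro x hx
        rw [hN] at hx; simp at hx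
        rcases hx with rfl | rfl | rfl <;> assumption
      · have := case_two G hmin hnoA h3 hN hab hac hbc da db dc
        linarith
      · have hN' : G.neighborFinset u = {a, c, b} := by
          rw [hN]; ext x; simp; tauto
        have := case_two G hmin hnoA h3 hN' hac hab hbc.symm da dc db
        linarith
      · have := case_one G h3 hN da db dc
        linarith
      · have hN' : G.neighborFinset u = {b, c, a} := by
          rw [hN]; ext x; simp; tauto
        have := case_two G hmin hnoA h3 hN' hbc hab.symm hac.symm db dc da
        linarith
      · have hN' : G.neighborFinset u = {b, a, c} := by
          rw [hN]; ext x; simp; tauto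
        have := case_one G h3 hN' db da dc
        linarith
      · have hN' : G.neighborFinset u = {c, a, b} := by
          rw [hN]; ext x; simp; tauto
        have := case_one G h3 hN' dc da db
        linarith
      · have := case_zero G hmin hnoB h3 hN hab hac hbc da db dc
        linarith
  · -- degree ≥ 4
    have hb : ∀ v ∈ G.neighborFinset u, (-1 : ℚ) ≤ transfer G v u - transfer G u v := by
      intro v _
      have h1 := transfer_nonneg G v u
      have h2 := transfer_le_one G u v
      linarith
    have hs := Finset.card_nsmul_le_sum (G.neighborFinset u) _ (-1 : ℚ) hb
    rw [card_neighborFinset_eq_degree, nsmul_eq_mul] at hs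
    have hc : (4 : ℚ) ≤ (G.degree u : ℚ) := by exact_mod_cast h4
    linarith
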